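/- arXiv:1809.10715 — 4 statements merged into one kernel-verified Lean document; each statement's English description precedes it below -/
import Mathlib

section
/- Let H be a proper linear subspace of ℝⁿ and ◇ : 𝒦ⁿ → 𝒦ⁿ_H a monotonic map into H-symmetric compact convex sets. If ◇ is invariant on H-symmetric spherical cylinders, then for every K ∈ 𝒦ⁿ, the orthogonal projection (◇K)|H contains K|H. -/
open Set MeasureTheory Metric Pointwise

noncomputable section

/-- Euclidean space `ℝⁿ`. -/
abbrev Euc (n : ℕ) := EuclideanSpace ℝ (Fin n)

/-- The orthogonal projection onto `H`, as a self-map `x ↦ x|H` of the ambient space. -/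
def projS {n : ℕ} (H : Submodule ℝ (Euc n)) (x : Euc n) : Euc n :=
  (H.orthogonalProjectionOnto x : Euc n)

/-- The reflection with respect to the subspace `H` : `x ↦ 2(x|H) − x`. -/
def reflS {n : ℕ} (H : Submodule ℝ (Euc n)) (x : Euc n) : Euc n :=
  (2 : ℝ) • projS H x - x

/-- `A` is symmetric with respect to the subspace `H`. -/
def SymmWrt {n : ℕ} (H : Submodule ℝ (Euc n)) (A : Set (Euc n)) : Prop :=
  reflS H '' A = A

/-- The orthogonal projection `A|H` of a set `A` onto `H`. -/
def pimg {n : ℕ} (H : Submodule ℝ (Euc n)) (A : Set (Euc n)) : Set (Euc n) :=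
  projS H '' A

/-- The `H`-symmetric spherical cylinder `(r(B∩H)+x)+s(B∩H^⊥)`. -/
def cylSet {n : ℕ} (H : Submodule ℝ (Euc n)) (r s : ℝ) (x : Euc n) : Set (Euc n) :=
  (fun y => x + y) '' (r • (closedBall (0 : Euc n) 1 ∩ (H : Set (Euc n)))
    + s • (closedBall (0 : Euc n) 1 ∩ ((Hᗮ : Submodule ℝ (Euc n)) : Set (Euc n))))

/-- Convex bodies of `ℝⁿ`: compact convex sets with nonempty interior. -/
abbrev FullBody (n : ℕ) := {K : ConvexBody (Euc n) // (interior (K : Set (Euc n))).Nonempty}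

/-- `L` is a convex body in the subspace `H`: a compact convex subset of `H` with
nonempty interior relative to `H`. -/
def IsBodyIn {n : ℕ} (H : Submodule ℝ (Euc n)) (L : Set (Euc n)) : Prop :=
  L ⊆ (H : Set (Euc n)) ∧ IsCompact L ∧ Convex ℝ L ∧
    (interior (((↑) : H → Euc n) ⁻¹' L)).Nonempty

/-- Sets of special form: `L + s(B ∩ H^⊥)` with `L` a convex body in `H` and `s > 0`. -/
def SpecialForm {n : ℕ} (H : Submodule ℝ (Euc n)) (T : Set (Euc n)) : Prop :=
  ∃ (L : Set (Euc n)) (s : ℝ), IsBodyIn H L ∧ 0 < s ∧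
    T = L + s • (closedBall (0 : Euc n) 1 ∩ ((Hᗮ : Submodule ℝ (Euc n)) : Set (Euc n)))

/-!
A point `x` lies in every `H`-symmetric spherical cylinder with centre `x|H`, radius `r > 0` and
height `‖x - x|H‖ + 1`. By monotonicity and invariance, `◇{x}` lies in all of these cylinders, so
every point of `◇{x}` projects to `x|H` as `r → 0`; and `◇{x} ⊆ ◇K` for `x ∈ K`.
-/

def ConvexBody.singleton {V : Type*} [TopologicalSpace V] [AddCommGroup V] [Module ℝ V]
    (x : V) : ConvexBody V :=
  ⟨{x}, convex_singleton x, isCompact_singleton, singleton_nonempty x⟩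

section BallInter

variable {E : Type*} [NormedAddCommGroup E] [NormedSpace ℝ E] (V : Submodule ℝ E) (r : ℝ)

lemma isCompact_smul_closedBall_inter [FiniteDimensional ℝ E] :
    IsCompact (r • (closedBall (0 : E) 1 ∩ (V : Set E))) :=
  ((isCompact_closedBall _ _).inter_right V.closed_of_finiteDimensional).smul r

lemma convex_smul_closedBall_inter : Convex ℝ (r • (closedBall (0 : E) 1 ∩ (V : Set E))) :=
  ((convex_closedBall _ _).inter V.convex).smul r

lemma zero_mem_smul_closedBall_inter : (0 : E) ∈ r • (closedBall (0 : E) 1 ∩ (V : Set E)) :=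
  zero_mem_smul_set ⟨mem_closedBall_self zero_le_one, V.zero_mem⟩

end BallInter

section Cylinder

variable {n : ℕ} (H : Submodule ℝ (Euc n))

lemma projS_apply (x : Euc n) : projS H x = H.starProjection x := rfl

lemma mem_cylSet_of_sub_mem_orthogonal {r s : ℝ} (hs : 0 < s) {x y : Euc n}
    (hyx : y - x ∈ Hᗮ) (hyxs : ‖y - x‖ ≤ s) : y ∈ cylSet H r s x := by
  refine ⟨0 + (y - x), add_mem_add (zero_mem_smul_closedBall_inter H r) ?_,
    by simp only [zero_add, add_sub_cancel]⟩
  rw [mem_smul_set_iff_inv_smul_mem₀ hs.ne']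
  refine ⟨?_, Hᗮ.smul_mem _ hyx⟩
  rw [mem_closedBall_zero_iff, norm_smul, norm_inv, Real.norm_of_nonneg hs.le]
  exact inv_mul_le_one_of_le₀ hyxs hs.le

lemma dist_projS_le_of_mem_cylSet {r s : ℝ} (hr : 0 ≤ r) {x y : Euc n} (hx : x ∈ H)
    (hy : y ∈ cylSet H r s x) : dist (projS H y) x ≤ r := by
  obtain ⟨_, ⟨_, ⟨a, ⟨ha, haH⟩, rfl⟩, _, ⟨b, ⟨-, hbH⟩, rfl⟩, rfl⟩, rfl⟩ := hy
  have hproj : projS H (x + (r • a + s • b)) = x + r • a := by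
    rw [projS_apply, map_add, map_add, map_smul, map_smul,
      H.starProjection_eq_self_iff.mpr hx, H.starProjection_eq_self_iff.mpr haH,
      H.starProjection_apply_eq_zero_iff.mpr hbH, smul_zero, add_zero]
  rw [hproj, dist_eq_norm, add_sub_cancel_left, norm_smul, Real.norm_of_nonneg hr]
  exact mul_le_of_le_one_right hr (mem_closedBall_zero_iff.mp ha)

def cylBody (r s : ℝ) (x : Euc n) : ConvexBody (Euc n) where
  carrier := cylSet H r s x
  convex' := ((convex_smul_closedBall_inter H r).add
    (convex_smul_closedBall_inter Hᗮ s)).translate x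
  isCompact' := ((isCompact_smul_closedBall_inter H r).add
    (isCompact_smul_closedBall_inter Hᗮ s)).image (continuous_const.add continuous_id)
  nonempty' := ⟨x + (0 + 0), 0 + 0,
    add_mem_add (zero_mem_smul_closedBall_inter H r) (zero_mem_smul_closedBall_inter Hᗮ s),
    rfl⟩

end Cylinder

theorem projS_eq_of_mem_dia_singleton {n : ℕ} (H : Submodule ℝ (Euc n))
    (dia : ConvexBody (Euc n) → ConvexBody (Euc n)) (hmono : Monotone dia)
    (hcyl : ∀ r s x, 0 < r → 0 < s → x ∈ H → dia (cylBody H r s x) = cylBody H r s x)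
    {x y : Euc n} (hy : y ∈ dia (.singleton x)) : projS H y = projS H x := by
  set p := projS H x
  have hp : p ∈ H := H.starProjection_apply_mem x
  set s := ‖x - p‖ + 1
  have hs : 0 < s := by positivity
  refine eq_of_forall_dist_le fun r hr ↦ dist_projS_le_of_mem_cylSet H (s := s) hr.le hp ?_
  have hx : x ∈ cylBody H r s p :=
    mem_cylSet_of_sub_mem_orthogonal H hs (H.sub_starProjection_mem_orthogonal x) (lt_add_one _).le
  have hsub : ConvexBody.singleton x ≤ cylBody H r s p := singleton_subset_iff.mpr hx
  change y ∈ cylBody H r s p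
  rw [← hcyl r s p hr hs hp]
  exact hmono hsub hy

theorem stmt5_general {n : ℕ} (H : Submodule ℝ (Euc n))
    (dia : ConvexBody (Euc n) → ConvexBody (Euc n))
    (hmono : ∀ K L : ConvexBody (Euc n),
      (K : Set (Euc n)) ⊆ (L : Set (Euc n)) → (dia K : Set (Euc n)) ⊆ (dia L : Set (Euc n)))
    (hcyl : ∀ (C : ConvexBody (Euc n)) (r s : ℝ) (x : Euc n), 0 < r → 0 < s → x ∈ H →
      (C : Set (Euc n)) = cylSet H r s x → dia C = C) :
    ∀ K : ConvexBody (Euc n), pimg H (K : Set (Euc n)) ⊆ pimg H (dia K : Set (Euc n)) := by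
  rintro K _ ⟨x, hxK, rfl⟩
  obtain ⟨y, hy⟩ := (dia (.singleton x)).nonempty'
  have hmono' : Monotone dia := fun K L h ↦ hmono K L h
  refine ⟨y, hmono' (singleton_subset_iff.mpr hxK) hy, ?_⟩
  exact projS_eq_of_mem_dia_singleton H dia hmono'
    (fun r s x hr hs hx ↦ hcyl _ r s x hr hs hx rfl) hy

/-- if `◇ : 𝒦ⁿ → 𝒦ⁿ_H` is monotonic and invariant on `H`-symmetric spherical
cylinders (`H` a proper subspace), then `(◇K)|H ⊇ K|H` for every `K ∈ 𝒦ⁿ`. -/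
theorem stmt5 {n : ℕ} (H : Submodule ℝ (Euc n)) (hH : H ≠ ⊤)
    (dia : ConvexBody (Euc n) → ConvexBody (Euc n))
    (hcod : ∀ K, SymmWrt H (dia K : Set (Euc n)))
    (hmono : ∀ K L : ConvexBody (Euc n),
      (K : Set (Euc n)) ⊆ (L : Set (Euc n)) → (dia K : Set (Euc n)) ⊆ (dia L : Set (Euc n)))
    (hcyl : ∀ (C : ConvexBody (Euc n)) (r s : ℝ) (x : Euc n), 0 < r → 0 < s → x ∈ H →
      (C : Set (Euc n)) = cylSet H r s x → dia C = C) :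
    ∀ K : ConvexBody (Euc n), pimg H (K : Set (Euc n)) ⊆ pimg H (dia K : Set (Euc n)) :=
  stmt5_general H dia hmono hcyl
end
end

section
/- Let H ∈ G_{n,i} and ◇ : 𝒦ⁿ → 𝒦ⁿ_H a monotonic symmetrization that is invariant on H-symmetric sets. Then for every affine subspace G of ℝⁿ that either contains a translate of H^⊥ or is a linear subspace of H^⊥, and every K ∈ 𝒦ⁿ with K ⊆ G, it holds ◇K ⊆ G. -/
/-!
With `σ` the reflection in `H`, the body `M = conv (K ∪ σ K)` is `H`-symmetric and contains `K`,
so `◇K ⊆ ◇M = M`. Both kinds of `G` are `σ`-invariant (in the first case `σ` moves points along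
`H^⊥ ⊆ direction G`, in the second `σ = -id` on `G`), hence `M ⊆ G` by convexity of `G`.
-/
open Set MeasureTheory Metric Pointwise

noncomputable section

theorem IsCompact.convexJoin {E : Type*} [AddCommGroup E] [Module ℝ E] [TopologicalSpace E]
    [IsTopologicalAddGroup E] [ContinuousSMul ℝ E] {s t : Set E}
    (hs : IsCompact s) (ht : IsCompact t) : IsCompact (_root_.convexJoin ℝ s t) := by
  have hjoin : _root_.convexJoin ℝ s t =
      (fun p : ℝ × E × E => (1 - p.1) • p.2.1 + p.1 • p.2.2) '' (Icc 0 1 ×ˢ s ×ˢ t) := by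
    ext z
    simp only [mem_convexJoin, segment_eq_image, mem_image, mem_prod, Prod.exists]
    constructor
    · rintro ⟨x, hx, y, hy, θ, hθ, rfl⟩
      exact ⟨θ, x, y, ⟨hθ, hx, hy⟩, rfl⟩
    · rintro ⟨θ, x, y, ⟨hθ, hx, hy⟩, rfl⟩
      exact ⟨x, hx, y, hy, θ, hθ, rfl⟩
  rw [hjoin]
  exact (isCompact_Icc.prod (hs.prod ht)).image (by fun_prop)

theorem AffineSubspace.le_direction_of_add_mem {k V : Type*} [Ring k] [AddCommGroup V]
    [Module k V] {W : Submodule k V} {G : AffineSubspace k V} {x : V}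
    (hx : ∀ y ∈ W, y + x ∈ G) : W ≤ G.direction := by
  intro y hy
  have hxG : x ∈ G := by simpa using hx 0 W.zero_mem
  simpa using G.vsub_mem_direction (hx y hy) hxG

section Reflection

variable {V : Type*} [NormedAddCommGroup V] [InnerProductSpace ℝ V]
  (H : Submodule ℝ V) [H.HasOrthogonalProjection]

theorem Submodule.reflection_mem_of_orthogonal_le_direction {G : AffineSubspace ℝ V}
    (hG : Hᗮ ≤ G.direction) {z : V} (hz : z ∈ G) : H.reflection z ∈ G := by
  have hperp : (-2 : ℝ) • (z - H.starProjection z) ∈ G.direction :=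
    G.direction.smul_mem _ (hG (H.sub_starProjection_mem_orthogonal z))
  convert AffineSubspace.vadd_mem_of_mem_direction hperp hz using 1
  rw [H.reflection_apply, vadd_eq_add]
  module

theorem Submodule.reflection_mem_of_subset_orthogonal {G : AffineSubspace ℝ V}
    (hG : (G : Set V) ⊆ Hᗮ) (h0 : (0 : V) ∈ G) {z : V} (hz : z ∈ G) : H.reflection z ∈ G := by
  rw [H.reflection_mem_subspace_orthogonalComplement_eq_neg (hG hz)]
  have hdir : z ∈ G.direction := by simpa using AffineSubspace.vsub_mem_direction hz h0
  simpa using AffineSubspace.vadd_mem_of_mem_direction (G.direction.neg_mem hdir) h0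

def ConvexBody.reflectionHull (K : ConvexBody V) : ConvexBody V where
  carrier := convexHull ℝ (K ∪ H.reflection '' K)
  convex' := convex_convexHull ℝ _
  isCompact' := by
    have hσK : Convex ℝ (H.reflection '' K) := K.convex.linear_image H.reflection.toLinearMap
    rw [K.convex.convexHull_union hσK K.nonempty (K.nonempty.image _)]
    exact K.isCompact.convexJoin (K.isCompact.image H.reflection.continuous)
  nonempty' := K.nonempty.mono (subset_union_left.trans (subset_convexHull ℝ _))

namespace ConvexBody

variable {H}

theorem subset_reflectionHull (K : ConvexBody V) : (K : Set V) ⊆ K.reflectionHull H :=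
  subset_union_left.trans (subset_convexHull ℝ _)

theorem reflection_image_reflectionHull (K : ConvexBody V) :
    H.reflection '' (K.reflectionHull H : Set V) = K.reflectionHull H := by
  change H.reflection.toLinearMap '' convexHull ℝ _ = convexHull ℝ _
  rw [LinearMap.image_convexHull, image_union, image_image]
  simp [union_comm]

theorem reflectionHull_subset {K : ConvexBody V} {G : AffineSubspace ℝ V} (hKG : (K : Set V) ⊆ G)
    (hG : ∀ z ∈ G, H.reflection z ∈ G) : (K.reflectionHull H : Set V) ⊆ G :=
  convexHull_min (union_subset hKG (image_subset_iff.2 fun z hz => hG z (hKG hz))) G.convex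

end ConvexBody

end Reflection

theorem reflS_eq_reflection {n : ℕ} (H : Submodule ℝ (Euc n)) : reflS H = H.reflection := by
  ext1 x
  rw [reflS, projS, H.reflection_apply, H.starProjection_apply, two_smul, two_smul]

theorem stmt11_general {n : ℕ}
    (H : Submodule ℝ (Euc n))
    (dia : ConvexBody (Euc n) → ConvexBody (Euc n))
    (hmono : ∀ K L : ConvexBody (Euc n),
      (K : Set (Euc n)) ⊆ (L : Set (Euc n)) → (dia K : Set (Euc n)) ⊆ (dia L : Set (Euc n)))
    (hinv : ∀ K : ConvexBody (Euc n), SymmWrt H (K : Set (Euc n)) → dia K = K)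
    (G : AffineSubspace ℝ (Euc n))
    (hG : (∃ x : Euc n, ∀ y ∈ (Hᗮ : Submodule ℝ (Euc n)), y + x ∈ G) ∨
      ((G : Set (Euc n)) ⊆ ((Hᗮ : Submodule ℝ (Euc n)) : Set (Euc n)) ∧ (0 : Euc n) ∈ G)) :
    ∀ K : ConvexBody (Euc n), (K : Set (Euc n)) ⊆ (G : Set (Euc n)) →
      (dia K : Set (Euc n)) ⊆ (G : Set (Euc n)) := by
  intro K hKG
  have hGσ : ∀ z ∈ G, H.reflection z ∈ G := by
    rcases hG with ⟨x, hx⟩ | ⟨hGH, h0⟩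
    · exact fun z => H.reflection_mem_of_orthogonal_le_direction (G.le_direction_of_add_mem hx)
    · exact fun z => H.reflection_mem_of_subset_orthogonal hGH h0
  have hsymm : SymmWrt H (K.reflectionHull H : Set (Euc n)) := by
    rw [SymmWrt, reflS_eq_reflection]
    exact K.reflection_image_reflectionHull
  calc (dia K : Set (Euc n)) ⊆ dia (K.reflectionHull H) := hmono _ _ K.subset_reflectionHull
    _ = K.reflectionHull H := by rw [hinv _ hsymm]
    _ ⊆ G := ConvexBody.reflectionHull_subset hKG hGσ

/-- Lemma on subspaces: if `◇ : 𝒦ⁿ → 𝒦ⁿ_H` is monotonic and invariant on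
`H`-symmetric sets, and the affine subspace `G` either contains a translate of `H^⊥` or is a
linear subspace of `H^⊥`, then `K ⊆ G` implies `◇K ⊆ G`. -/
theorem stmt11 {n i : ℕ} (hin : i ≤ n - 1)
    (H : Submodule ℝ (Euc n)) (hHr : Module.finrank ℝ H = i)
    (dia : ConvexBody (Euc n) → ConvexBody (Euc n))
    (hcod : ∀ K, SymmWrt H (dia K : Set (Euc n)))
    (hmono : ∀ K L : ConvexBody (Euc n),
      (K : Set (Euc n)) ⊆ (L : Set (Euc n)) → (dia K : Set (Euc n)) ⊆ (dia L : Set (Euc n)))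
    (hinv : ∀ K : ConvexBody (Euc n), SymmWrt H (K : Set (Euc n)) → dia K = K)
    (G : AffineSubspace ℝ (Euc n))
    (hG : (∃ x : Euc n, ∀ y ∈ (Hᗮ : Submodule ℝ (Euc n)), y + x ∈ G) ∨
      ((G : Set (Euc n)) ⊆ ((Hᗮ : Submodule ℝ (Euc n)) : Set (Euc n)) ∧ (0 : Euc n) ∈ G)) :
    ∀ K : ConvexBody (Euc n), (K : Set (Euc n)) ⊆ (G : Set (Euc n)) →
      (dia K : Set (Euc n)) ⊆ (G : Set (Euc n)) :=
  stmt11_general H dia hmono hinv G hG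
end
end

section
/- Let ◇ : 𝒦ⁿ → 𝒦ⁿ_{{o}} be a monotonic, mean-width-preserving symmetrization (into origin-symmetric compact convex sets) which is invariant on origin-symmetric sets and invariant under all translations (◇(K + x) = K for origin-symmetric K and any x ∈ ℝⁿ). Then ◇K = (K + (−K))/2 for every K ∈ 𝒦ⁿ, i.e., ◇ is Minkowski symmetrization with respect to {o}. -/
open Set MeasureTheory Metric Pointwise

noncomputable section

/-- The mean width `W(K) = 2∫_{S^{n-1}} h_K(u) dσ(u)`, where `σ` is the rotation invariant
probability measure on the unit sphere (normalized `(n-1)`-dimensional Hausdorff measure)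
and `h_K` is the support function of `K`. -/
def meanWidth {n : ℕ} (K : Set (Euc n)) : ℝ :=
  2 * ∫ u in sphere (0 : Euc n) 1, sSup ((fun x => (inner ℝ x u : ℝ)) '' K)
      ∂((μH[(n : ℝ) - 1] (sphere (0 : Euc n) 1))⁻¹ • μH[(n : ℝ) - 1])

/-!
Minkowski symmetrization is squeezed between the two hypotheses. If `p, q ∈ K`, the segment
`[p, q]` is a translate of the origin-symmetric segment `[c, -c]`, `c = (p - q)/2`, so
`c ∈ ◇[p, q] ⊆ ◇K`. Conversely, if `z ∉ (K - K)/2`, a linear functional `f` separates `z` from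
`(K - K)/2`; the slab `|f| ≤ (max_K f - min_K f)/2`, cut down to a large ball, is an
origin-symmetric body missing `z` a translate of which contains `K`, and then `◇K` lies in it.
-/

variable {E : Type*} [NormedAddCommGroup E] [NormedSpace ℝ E]

theorem isCompact_segment (a b : E) : IsCompact (segment ℝ a b) := by
  rw [← convexHull_pair]
  exact (toFinite {a, b}).isCompact_convexHull ℝ

theorem neg_segment (a b : E) : -segment ℝ a b = segment ℝ (-a) (-b) := by
  rw [← convexHull_pair (𝕜 := ℝ), ← convexHull_neg, neg_insert, neg_singleton, convexHull_pair]

def TranslationInvariantOnSymmetric (dia : ConvexBody E → ConvexBody E) : Prop :=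
  ∀ (K L : ConvexBody E) (x : E), (K : Set E) = -(K : Set E) →
    (L : Set E) = (fun y => x + y) '' (K : Set E) → dia L = K

section Symmetrization

variable {dia : ConvexBody E → ConvexBody E}

theorem half_sub_mem_of_mem (hmono : Monotone dia) (htrans : TranslationInvariantOnSymmetric dia)
    {K : ConvexBody E} {p q : E} (hp : p ∈ K) (hq : q ∈ K) :
    (2 : ℝ)⁻¹ • (p - q) ∈ (dia K : Set E) := by
  set c : E := (2 : ℝ)⁻¹ • (p - q)
  let S₀ : ConvexBody E :=
    ⟨segment ℝ c (-c), convex_segment _ _, isCompact_segment _ _, ⟨c, left_mem_segment ℝ _ _⟩⟩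
  let S : ConvexBody E :=
    ⟨segment ℝ p q, convex_segment _ _, isCompact_segment _ _, ⟨p, left_mem_segment ℝ _ _⟩⟩
  have hS₀ : (S₀ : Set E) = -(S₀ : Set E) := by
    change segment ℝ c (-c) = -segment ℝ c (-c)
    rw [neg_segment, neg_neg, segment_symm]
  have hS : (S : Set E) = (fun y => (2 : ℝ)⁻¹ • (p + q) + y) '' (S₀ : Set E) := by
    change segment ℝ p q = _ '' segment ℝ c (-c)
    rw [segment_translate_image]
    congr 1 <;> module
  have hdS : dia S = S₀ := htrans S₀ S _ hS₀ hS
  have hSK : dia S ≤ dia K := hmono (K.convex.segment_subset hp hq)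
  exact hSK (hdS ▸ left_mem_segment ℝ c (-c))

theorem coe_subset_of_subset_translate (hmono : Monotone dia)
    (htrans : TranslationInvariantOnSymmetric dia) {K : ConvexBody E} {C : Set E} {x : E}
    (hCc : IsCompact C) (hCconv : Convex ℝ C) (hC : C = -C)
    (hKC : (K : Set E) ⊆ (fun y => x + y) '' C) : (dia K : Set E) ⊆ C := by
  let C' : ConvexBody E := ⟨C, hCconv, hCc, (K.nonempty.mono hKC).of_image⟩
  let L : ConvexBody E := ⟨_, hCconv.translate x, hCc.image (by fun_prop), K.nonempty.mono hKC⟩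
  have hdL : dia L = C' := htrans C' L x hC rfl
  have hKL : dia K ≤ dia L := hmono hKC
  rwa [hdL] at hKL

end Symmetrization

theorem exists_translate_superset_symmetric_not_mem [FiniteDimensional ℝ E] {K : Set E}
    (hK : IsCompact K) (hKconv : Convex ℝ K) (hne : K.Nonempty) {z : E}
    (hz : z ∉ (2 : ℝ)⁻¹ • (K + -K)) :
    ∃ (x : E) (C : Set E), IsCompact C ∧ Convex ℝ C ∧ C = -C ∧
      K ⊆ (fun y => x + y) '' C ∧ z ∉ C := by
  obtain ⟨f, u, hfM, hfz⟩ := geometric_hahn_banach_closed_point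
    ((hKconv.add hKconv.neg).smul _) ((hK.add hK.neg).smul _).isClosed hz
  obtain ⟨a, haK, ha⟩ := hK.exists_isMaxOn hne f.continuous.continuousOn
  obtain ⟨b, hbK, hb⟩ := hK.exists_isMinOn hne f.continuous.continuousOn
  set w := (f a - f b) / 2 with hw
  have hwz : w < f z := by
    have hab := hfM _ (smul_mem_smul_set (add_mem_add haK (neg_mem_neg.2 hbK)))
    rw [map_smul, map_add, map_neg, smul_eq_mul] at hab
    linarith
  obtain ⟨r, hr⟩ := hK.isBounded.subset_closedBall ((2 : ℝ)⁻¹ • (a + b))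
  refine ⟨(2 : ℝ)⁻¹ • (a + b), f ⁻¹' Icc (-w) w ∩ closedBall 0 r, ?_, ?_, ?_, ?_,
    fun h => (h.1.2.trans_lt hwz).false⟩
  · exact isCompact_of_isClosed_isBounded
      ((isClosed_Icc.preimage f.continuous).inter isClosed_closedBall)
      (isBounded_closedBall.subset inter_subset_right)
  · exact ((convex_Icc _ _).linear_preimage f.toLinearMap).inter (convex_closedBall _ _)
  · ext y
    simp only [mem_neg, mem_inter_iff, mem_preimage, map_neg, mem_Icc, mem_closedBall_zero_iff,
      norm_neg]
    constructor <;> rintro ⟨⟨h₁, h₂⟩, h₃⟩ <;> exact ⟨⟨by linarith, by linarith⟩, h₃⟩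
  · intro k hk
    refine ⟨k - (2 : ℝ)⁻¹ • (a + b), ⟨?_, ?_⟩, add_sub_cancel _ _⟩
    · have hka : f k ≤ f a := ha hk
      have hbk : f b ≤ f k := hb hk
      simp only [mem_preimage, mem_Icc, map_sub, map_smul, map_add, smul_eq_mul]
      constructor <;> linarith
    · rw [mem_closedBall_zero_iff, ← dist_eq_norm]
      exact hr hk

theorem stmt12_general {n : ℕ}
    (dia : ConvexBody (Euc n) → ConvexBody (Euc n))
    (hmono : ∀ K L : ConvexBody (Euc n),
      (K : Set (Euc n)) ⊆ (L : Set (Euc n)) → (dia K : Set (Euc n)) ⊆ (dia L : Set (Euc n)))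
    (htrans : ∀ (K L : ConvexBody (Euc n)) (x : Euc n),
      (K : Set (Euc n)) = -(K : Set (Euc n)) →
      (L : Set (Euc n)) = (fun y => x + y) '' (K : Set (Euc n)) → dia L = K) :
    ∀ K : ConvexBody (Euc n),
      (dia K : Set (Euc n)) = (2 : ℝ)⁻¹ • ((K : Set (Euc n)) + -(K : Set (Euc n))) := by
  have hmono' : Monotone dia := fun K L h => hmono K L h
  intro K
  refine Subset.antisymm (fun z hz => ?_) ?_
  · by_contra hzM
    obtain ⟨x, C, hCc, hCconv, hC, hKC, hzC⟩ :=
      exists_translate_superset_symmetric_not_mem K.isCompact K.convex K.nonempty hzM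
    exact hzC (coe_subset_of_subset_translate hmono' htrans hCc hCconv hC hKC hz)
  · rintro _ ⟨_, ⟨p, hp, q, hq, rfl⟩, rfl⟩
    simpa only [sub_neg_eq_add] using half_sub_mem_of_mem hmono' htrans hp (mem_neg.1 hq)

/-- Theorem on characterization of Minkowski symmetrization, case `i = 0`:
a monotonic, mean-width preserving `o`-symmetrization `◇ : 𝒦ⁿ → 𝒦ⁿ_{o}` which is invariant
on `o`-symmetric sets and invariant under all translations of `o`-symmetric sets is the
Minkowski symmetrization `K ↦ (K + (−K))/2`. -/
theorem stmt12 {n : ℕ} (hn : 1 ≤ n)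
    (dia : ConvexBody (Euc n) → ConvexBody (Euc n))
    (hcod : ∀ K, (dia K : Set (Euc n)) = -(dia K : Set (Euc n)))
    (hmono : ∀ K L : ConvexBody (Euc n),
      (K : Set (Euc n)) ⊆ (L : Set (Euc n)) → (dia K : Set (Euc n)) ⊆ (dia L : Set (Euc n)))
    (hW : ∀ K : ConvexBody (Euc n),
      meanWidth (dia K : Set (Euc n)) = meanWidth (K : Set (Euc n)))
    (hinv : ∀ K : ConvexBody (Euc n), (K : Set (Euc n)) = -(K : Set (Euc n)) → dia K = K)
    (htrans : ∀ (K L : ConvexBody (Euc n)) (x : Euc n),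
      (K : Set (Euc n)) = -(K : Set (Euc n)) →
      (L : Set (Euc n)) = (fun y => x + y) '' (K : Set (Euc n)) → dia L = K) :
    ∀ K : ConvexBody (Euc n),
      (dia K : Set (Euc n)) = (2 : ℝ)⁻¹ • ((K : Set (Euc n)) + -(K : Set (Euc n))) :=
  stmt12_general dia hmono htrans
end
end

section
/- Let H ∈ G_{n,i}, ◇ : 𝒦ⁿₙ → 𝒦ⁿ_{n,H} a monotonic symmetrization with natural extension ◇̄K = ⋂_{m≥1} ◇(K + (1/m)B). Suppose there exists a strictly monotonic, Hausdorff-continuous set function F : 𝒦ⁿₙ → ℝ with F(◇K) = F(K) for all convex bodies K. Then ◇̄K = ◇K for all convex bodies K. -/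
open Set MeasureTheory Metric Pointwise

noncomputable section

/-! `◇̄K` is a convex body containing `◇K`. As `K + (1/m)B → K`, continuity of `F`,
monotonicity of `F` and `F ∘ ◇ = F` give `F(◇̄K) ≤ lim F(K + (1/m)B) = F(K) = F(◇K)`,
so by strict monotonicity the inclusion `◇K ⊆ ◇̄K` cannot be proper. -/

open Filter Topology

theorem hausdorffDist_add_closedBall_le {E : Type*} [SeminormedAddCommGroup E] (K : Set E)
    {r : ℝ} (hr : 0 ≤ r) : hausdorffDist (K + closedBall 0 r) K ≤ r := by
  refine hausdorffDist_le_of_mem_dist hr ?_ ?_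
  · rintro _ ⟨x, hx, b, hb, rfl⟩
    exact ⟨x, hx, by simpa [dist_eq_norm] using hb⟩
  · intro x hx
    exact ⟨x + 0, add_mem_add hx (mem_closedBall_self hr), by simpa using hr⟩

namespace ConvexBody

variable {V : Type*} [SeminormedAddCommGroup V] [NormedSpace ℝ V]

theorem tendsto_of_coe_eq_add_closedBall (K : ConvexBody V) (Km : ℕ → ConvexBody V)
    (hKm : ∀ m : ℕ, (Km m : Set V) = (K : Set V) + closedBall 0 (1 / (m + 1))) :
    Tendsto Km atTop (𝓝 K) := by
  rw [tendsto_iff_dist_tendsto_zero]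
  refine squeeze_zero (fun _ => dist_nonneg) (fun m => ?_)
    tendsto_one_div_add_atTop_nhds_zero_nat
  rw [← hausdorffDist_coe, hKm m]
  exact hausdorffDist_add_closedBall_le _ (by positivity)

def iInter [T2Space V] {ι : Type*} [Nonempty ι] (K : ι → ConvexBody V)
    (h : (⋂ i, (K i : Set V)).Nonempty) : ConvexBody V where
  carrier := ⋂ i, (K i : Set V)
  convex' := convex_iInter fun i => (K i).convex
  isCompact' := (K (Classical.arbitrary ι)).isCompact.of_isClosed_subset
    (isClosed_iInter fun i => (K i).isClosed) (iInter_subset _ _)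
  nonempty' := h

end ConvexBody

namespace FullBody

variable {n : ℕ} {F : FullBody n → ℝ}

theorem le_of_subset (hF : ∀ K L : FullBody n, (K.1 : Set (Euc n)) ⊂ L.1 → F K < F L)
    {K L : FullBody n} (h : (K.1 : Set (Euc n)) ⊆ L.1) : F K ≤ F L := by
  rcases h.eq_or_ssubset with h | h
  · rw [Subtype.ext (ConvexBody.ext h)]
  · exact (hF K L h).le

theorem coe_eq_of_subset_of_le
    (hF : ∀ K L : FullBody n, (K.1 : Set (Euc n)) ⊂ L.1 → F K < F L)
    {K L : FullBody n} (h : (K.1 : Set (Euc n)) ⊆ L.1) (hle : F L ≤ F K) :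
    (K.1 : Set (Euc n)) = L.1 :=
  h.eq_of_not_ssubset fun hss => (hF K L hss).not_ge hle

end FullBody

theorem stmt17_general {n : ℕ}
    (H : Submodule ℝ (Euc n))
    (dia : FullBody n → ConvexBody (Euc n))
    (hcod : ∀ K, SymmWrt H (dia K : Set (Euc n)) ∧ (interior (dia K : Set (Euc n))).Nonempty)
    (hmono : ∀ K L : FullBody n,
      (K.1 : Set (Euc n)) ⊆ (L.1 : Set (Euc n)) → (dia K : Set (Euc n)) ⊆ (dia L : Set (Euc n)))
    (F : FullBody n → ℝ)
    (hFcont : Continuous F)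
    (hFmono : ∀ K L : FullBody n, (K.1 : Set (Euc n)) ⊂ (L.1 : Set (Euc n)) → F K < F L)
    (hFpres : ∀ K : FullBody n, F ⟨dia K, (hcod K).2⟩ = F K) :
    ∀ (K : FullBody n) (Km : ℕ → FullBody n),
      (∀ m : ℕ, ((Km m).1 : Set (Euc n))
        = (K.1 : Set (Euc n)) + closedBall (0 : Euc n) (1 / (m + 1))) →
      (⋂ m : ℕ, (dia (Km m) : Set (Euc n))) = (dia K : Set (Euc n)) := by
  intro K Km hKm
  have hKsub : ∀ m, (K.1 : Set (Euc n)) ⊆ (Km m).1 := fun m =>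
    hKm m ▸ subset_add_left _ (mem_closedBall_self (by positivity))
  have hdiasub : (dia K : Set (Euc n)) ⊆ ⋂ m, (dia (Km m) : Set (Euc n)) :=
    subset_iInter fun m => hmono _ _ (hKsub m)
  let D : FullBody n := ⟨ConvexBody.iInter (fun m => dia (Km m))
    (((hcod K).2.mono interior_subset).mono hdiasub), (hcod K).2.mono (interior_mono hdiasub)⟩
  have hlim : Tendsto Km atTop (𝓝 K) := tendsto_subtype_rng.2 <|
    ConvexBody.tendsto_of_coe_eq_add_closedBall K.1 (fun m => (Km m).1) hKm
  have hFD : F D ≤ F K := ge_of_tendsto' ((hFcont.tendsto K).comp hlim) fun m =>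
    (FullBody.le_of_subset hFmono (iInter_subset _ m)).trans_eq (hFpres (Km m))
  exact (FullBody.coe_eq_of_subset_of_le (L := D) hFmono hdiasub
    (hFD.trans_eq (hFpres K).symm)).symm

/-- Lemma on the natural extension, (i): if `◇ : 𝒦ⁿₙ → 𝒦ⁿ_{n,H}` is a
monotonic symmetrization and there is a strictly monotonic, Hausdorff-continuous set
function `F : 𝒦ⁿₙ → ℝ` with `F(◇K) = F(K)`, then the natural extension
`◇̄K = ⋂_m ◇(K + (1/m)B)` agrees with `◇` on convex bodies.
(The metric on convex bodies is the Hausdorff metric.) -/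
theorem stmt17 {n i : ℕ}
    (H : Submodule ℝ (Euc n)) (hHr : Module.finrank ℝ H = i)
    (dia : FullBody n → ConvexBody (Euc n))
    (hcod : ∀ K, SymmWrt H (dia K : Set (Euc n)) ∧ (interior (dia K : Set (Euc n))).Nonempty)
    (hmono : ∀ K L : FullBody n,
      (K.1 : Set (Euc n)) ⊆ (L.1 : Set (Euc n)) → (dia K : Set (Euc n)) ⊆ (dia L : Set (Euc n)))
    (F : FullBody n → ℝ)
    (hFcont : Continuous F)
    (hFmono : ∀ K L : FullBody n, (K.1 : Set (Euc n)) ⊂ (L.1 : Set (Euc n)) → F K < F L)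
    (hFpres : ∀ K : FullBody n, F ⟨dia K, (hcod K).2⟩ = F K) :
    ∀ (K : FullBody n) (Km : ℕ → FullBody n),
      (∀ m : ℕ, ((Km m).1 : Set (Euc n))
        = (K.1 : Set (Euc n)) + closedBall (0 : Euc n) (1 / (m + 1))) →
      (⋂ m : ℕ, (dia (Km m) : Set (Euc n))) = (dia K : Set (Euc n)) :=
  stmt17_general H dia hcod hmono F hFcont hFmono hFpres
end
end
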